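/- arXiv:2308.12684 — 3 statements merged into one kernel-verified Lean document; each statement's English description precedes it below -/
import Mathlib

section
/- Let m ≥ 3, let γ : ℝ → EuclideanSpace ℝ (Fin m) be a smooth unit-speed curve, let N be a unit normal field along γ, and let W be a smooth map with ‖W(t)‖ = 1 and W(t) ∈ ℋ(N)_t for all t, such that W is parallel in ℋ(N) (π_{ℋ(N)_t}(W'(t)) = 0 for all t) and the geodesic torsion vector -π_{ℋ(N)_t}(N'(t)) is a scalar multiple of W(t) for every t. Set τ_g(t) = -⟨N'(t), W(t)⟩, θ(t) = -∫₀ᵗ τ_g(s) ds, and Z(t) = -sin(θ(t)) W(t) + cos(θ(t)) N(t). Then Z is a smooth unit normal field along γ and Z'(t) is a scalar multiple of γ'(t) for every t; that is, γ appears as a line of curvature of an oriented hypersurface with unit normal Z along γ. -/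
/-!
Rotating the normal `N` inside the plane `span{W, N}` by the angle `θ` with `θ' = ⟪N', W⟫`
cancels the geodesic torsion. Parallelism of `W` in `ℋ(N)` and the torsion condition give
the frame equations `W' = a γ' - ⟪N', W⟫ N` and `N' = b γ' + ⟪N', W⟫ W` (the `N`-components
come from differentiating `⟪W, N⟫ = 0` and `‖N‖ = 1`), and with these the `W`- and
`N`-components of `Z'` cancel, leaving `Z' = (b cos θ - a sin θ) γ'`.
-/

open scoped RealInnerProductSpace

/-- Orthogonal projection onto `ℋ(N)ₜ`, the orthogonal complement of
`span{γ'(t), N(t)}` in `EuclideanSpace ℝ (Fin m)`. -/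
noncomputable def projH {m : ℕ} (γ N : ℝ → EuclideanSpace ℝ (Fin m)) (t : ℝ)
    (x : EuclideanSpace ℝ (Fin m)) : EuclideanSpace ℝ (Fin m) :=
  (Submodule.orthogonalProjectionOnto ((Submodule.span ℝ {deriv γ t, N t})ᗮ) x :
    EuclideanSpace ℝ (Fin m))

section InnerProductSpace

variable {E : Type*} [NormedAddCommGroup E] [InnerProductSpace ℝ E]

theorem inner_eq_zero_of_mem_orthogonal_span_pair {u v w : E}
    (hw : w ∈ (Submodule.span ℝ {u, v})ᗮ) : ⟪w, u⟫ = 0 ∧ ⟪w, v⟫ = 0 :=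
  ⟨(Submodule.mem_orthogonal' _ w).mp hw u (Submodule.subset_span (by simp)),
    (Submodule.mem_orthogonal' _ w).mp hw v (Submodule.subset_span (by simp))⟩

theorem exists_eq_smul_add_inner_smul_of_mem_span_pair {v n x : E} (hnv : ⟪n, v⟫ = 0)
    (hn : ‖n‖ = 1) (hx : x ∈ Submodule.span ℝ {v, n}) :
    ∃ a : ℝ, x = a • v + ⟪x, n⟫ • n := by
  obtain ⟨a, b, rfl⟩ := Submodule.mem_span_pair.mp hx
  refine ⟨a, ?_⟩
  simp [inner_add_left, real_inner_smul_left, real_inner_comm n v, hnv, hn]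

theorem inner_deriv_add_inner_deriv_eq_zero {f g : ℝ → E} {c t : ℝ}
    (hf : DifferentiableAt ℝ f t) (hg : DifferentiableAt ℝ g t) (h : ∀ s, ⟪f s, g s⟫ = c) :
    ⟪deriv f t, g t⟫ + ⟪f t, deriv g t⟫ = 0 := by
  have hderiv := hf.hasDerivAt.inner ℝ hg.hasDerivAt
  rw [show (fun s => ⟪f s, g s⟫) = fun _ => c from funext h] at hderiv
  linarith [hderiv.unique (hasDerivAt_const t c)]

theorem norm_neg_sin_smul_add_cos_smul {w n : E} (hw : ‖w‖ = 1) (hn : ‖n‖ = 1)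
    (hwn : ⟪w, n⟫ = 0) (θ : ℝ) : ‖-Real.sin θ • w + Real.cos θ • n‖ = 1 := by
  have horth : ⟪-Real.sin θ • w, Real.cos θ • n⟫ = 0 := by
    rw [real_inner_smul_left, real_inner_smul_right, hwn]; ring
  have h := norm_add_sq_eq_norm_sq_add_norm_sq_real horth
  simp only [norm_smul, norm_neg, hw, hn, mul_one, Real.norm_eq_abs, abs_mul_abs_self] at h
  have hsq : ‖-Real.sin θ • w + Real.cos θ • n‖ ^ 2 = 1 := by
    rw [sq, h]; linear_combination Real.sin_sq_add_cos_sq θ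
  exact (pow_eq_one_iff_of_nonneg (norm_nonneg _) two_ne_zero).mp hsq

theorem HasDerivAt.neg_sin_smul_add_cos_smul {θ : ℝ → ℝ} {W N : ℝ → E} {v : E} {κ a b t : ℝ}
    (hθ : HasDerivAt θ κ t) (hW : HasDerivAt W (a • v - κ • N t) t)
    (hN : HasDerivAt N (b • v + κ • W t) t) :
    HasDerivAt (fun s => -Real.sin (θ s) • W s + Real.cos (θ s) • N s)
      ((-Real.sin (θ t) * a + Real.cos (θ t) * b) • v) t := by
  convert (hθ.sin.fun_neg.smul hW).add (hθ.cos.smul hN) using 1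
  · rfl
  · module

end InnerProductSpace

theorem ContDiff.integral_right {F : Type*} [NormedAddCommGroup F] [NormedSpace ℝ F]
    [CompleteSpace F] {f : ℝ → F} (hf : ContDiff ℝ (⊤ : ℕ∞) f) (a : ℝ) :
    ContDiff ℝ (⊤ : ℕ∞) fun u => ∫ s in a..u, f s := by
  refine contDiff_infty_iff_deriv.mpr ⟨fun u => ?_, ?_⟩
  · exact (hf.continuous.integral_hasStrictDerivAt a u).hasDerivAt.differentiableAt
  · rwa [funext fun u => hf.continuous.deriv_integral f a u]

section Frame

variable {m : ℕ} {γ N W : ℝ → EuclideanSpace ℝ (Fin m)} {t : ℝ}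

theorem sub_projH_mem_span (x : EuclideanSpace ℝ (Fin m)) :
    x - projH γ N t x ∈ Submodule.span ℝ {deriv γ t, N t} := by
  set K := Submodule.span ℝ {deriv γ t, N t}
  rw [show x - projH γ N t x = K.starProjection x from
    (eq_sub_of_add_eq (K.starProjection_add_starProjection_orthogonal x)).symm]
  exact K.starProjection_apply_mem x

theorem exists_deriv_eq_of_projH_deriv_eq_zero (hW : DifferentiableAt ℝ W t)
    (hN : DifferentiableAt ℝ N t) (hNunit : ‖N t‖ = 1) (hNorth : ⟪N t, deriv γ t⟫ = 0)
    (hWN : ∀ s, ⟪W s, N s⟫ = 0) (hpar : projH γ N t (deriv W t) = 0) :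
    ∃ a : ℝ, deriv W t = a • deriv γ t - ⟪deriv N t, W t⟫ • N t := by
  have hmem := sub_projH_mem_span (γ := γ) (N := N) (t := t) (deriv W t)
  rw [hpar, sub_zero] at hmem
  obtain ⟨a, ha⟩ := exists_eq_smul_add_inner_smul_of_mem_span_pair hNorth hNunit hmem
  have hWN' := inner_deriv_add_inner_deriv_eq_zero hW hN hWN
  refine ⟨a, ha.trans ?_⟩
  rw [real_inner_comm (W t), ← neg_eq_of_add_eq_zero_left hWN', neg_smul, sub_eq_add_neg]

theorem exists_deriv_eq_of_neg_projH_deriv_eq_smul (hN : DifferentiableAt ℝ N t)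
    (hNunit : ∀ s, ‖N s‖ = 1) (hNorth : ⟪N t, deriv γ t⟫ = 0) (hWunit : ‖W t‖ = 1)
    (hWmem : W t ∈ (Submodule.span ℝ {deriv γ t, N t})ᗮ)
    (htors : ∃ c : ℝ, -projH γ N t (deriv N t) = c • W t) :
    ∃ b : ℝ, deriv N t = b • deriv γ t + ⟪deriv N t, W t⟫ • W t := by
  obtain ⟨c, hc⟩ := htors
  have hmem := sub_projH_mem_span (γ := γ) (N := N) (t := t) (deriv N t)
  rw [neg_eq_iff_eq_neg.mp hc, sub_neg_eq_add] at hmem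
  have hc : c = -⟪deriv N t, W t⟫ := by
    have h := Submodule.inner_right_of_mem_orthogonal hmem hWmem
    rw [inner_add_left, real_inner_smul_left, real_inner_self_eq_norm_sq, hWunit] at h
    linarith
  have hNN : ⟪N t, deriv N t⟫ = 0 := by
    have h := inner_deriv_add_inner_deriv_eq_zero hN hN
      fun s => by rw [real_inner_self_eq_norm_sq, hNunit s]
    rw [real_inner_comm (N t)] at h
    linarith
  have hWN := (inner_eq_zero_of_mem_orthogonal_span_pair hWmem).2
  obtain ⟨b, hb⟩ := exists_eq_smul_add_inner_smul_of_mem_span_pair hNorth (hNunit t) hmem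
  rw [inner_add_left, real_inner_smul_left, hWN, real_inner_comm (N t), hNN] at hb
  refine ⟨b, ?_⟩
  rw [hc] at hb
  linear_combination (norm := module) hb

end Frame

theorem exists_line_of_curvature_of_open_curve_general
    (m : ℕ)
    (γ : ℝ → EuclideanSpace ℝ (Fin m))
    (N : ℝ → EuclideanSpace ℝ (Fin m))
    (hNsmooth : ContDiff ℝ (⊤ : ℕ∞) N)
    (hNunit : ∀ t, ‖N t‖ = 1)
    (hNorth : ∀ t, ⟪N t, deriv γ t⟫ = 0)
    (W : ℝ → EuclideanSpace ℝ (Fin m))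
    (hWsmooth : ContDiff ℝ (⊤ : ℕ∞) W)
    (hWunit : ∀ t, ‖W t‖ = 1)
    (hWmem : ∀ t, W t ∈ (Submodule.span ℝ {deriv γ t, N t})ᗮ)
    (hWparallel : ∀ t, projH γ N t (deriv W t) = 0)
    (hWtorsion : ∀ t, ∃ c : ℝ, -projH γ N t (deriv N t) = c • W t)
    (τg : ℝ → ℝ) (hτg : ∀ t, τg t = -⟪deriv N t, W t⟫)
    (θ : ℝ → ℝ) (hθ : ∀ t, θ t = -∫ s in (0:ℝ)..t, τg s)
    (Z : ℝ → EuclideanSpace ℝ (Fin m))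
    (hZ : ∀ t, Z t = -Real.sin (θ t) • W t + Real.cos (θ t) • N t) :
    ContDiff ℝ (⊤ : ℕ∞) Z ∧
      (∀ t, ‖Z t‖ = 1) ∧
      (∀ t, ⟪Z t, deriv γ t⟫ = 0) ∧
      (∀ t, ∃ c : ℝ, deriv Z t = c • deriv γ t) := by
  obtain rfl : Z = fun t => -Real.sin (θ t) • W t + Real.cos (θ t) • N t := funext hZ
  have hNd : Differentiable ℝ N := hNsmooth.differentiable (by simp)
  have hWd : Differentiable ℝ W := hWsmooth.differentiable (by simp)
  have hWγN (t : ℝ) := inner_eq_zero_of_mem_orthogonal_span_pair (hWmem t)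
  have hτ : ContDiff ℝ (⊤ : ℕ∞) τg := by
    rw [funext hτg]
    exact ((contDiff_infty_iff_deriv.mp hNsmooth).2.inner ℝ hWsmooth).neg
  have hθ' (t : ℝ) : HasDerivAt θ ⟪deriv N t, W t⟫ t := by
    rw [funext hθ, ← neg_neg ⟪deriv N t, W t⟫, ← hτg]
    exact (hτ.continuous.integral_hasStrictDerivAt 0 t).hasDerivAt.fun_neg
  have hθsmooth : ContDiff ℝ (⊤ : ℕ∞) θ := by
    rw [funext hθ]
    exact (hτ.integral_right 0).neg
  refine ⟨((Real.contDiff_sin.comp hθsmooth).neg.smul hWsmooth).add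
      ((Real.contDiff_cos.comp hθsmooth).smul hNsmooth),
    fun t => norm_neg_sin_smul_add_cos_smul (hWunit t) (hNunit t) (hWγN t).2 _,
    fun t => by simp [inner_add_left, real_inner_smul_left, (hWγN t).1, hNorth], fun t => ?_⟩
  obtain ⟨a, ha⟩ := exists_deriv_eq_of_projH_deriv_eq_zero (hWd t) (hNd t) (hNunit t) (hNorth t)
    (fun s => (hWγN s).2) (hWparallel t)
  obtain ⟨b, hb⟩ := exists_deriv_eq_of_neg_projH_deriv_eq_smul (hNd t) hNunit (hNorth t)
    (hWunit t) (hWmem t) (hWtorsion t)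
  exact ⟨_, ((hθ' t).neg_sin_smul_add_cos_smul (ha ▸ (hWd t).hasDerivAt)
    (hb ▸ (hNd t).hasDerivAt)).deriv⟩

/-- If `N` is torsion-defining with parallel torsion direction `W`, then the rotated
normal `Z = -sin θ · W + cos θ · N`, with `θ(t) = -∫₀ᵗ τ_g`, exhibits `γ` as a line of
curvature of an oriented hypersurface. -/
theorem exists_line_of_curvature_of_open_curve
    (m : ℕ) (hm : 3 ≤ m)
    (γ : ℝ → EuclideanSpace ℝ (Fin m))
    (hsmooth : ContDiff ℝ (⊤ : ℕ∞) γ)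
    (hunit : ∀ t, ‖deriv γ t‖ = 1)
    (N : ℝ → EuclideanSpace ℝ (Fin m))
    (hNsmooth : ContDiff ℝ (⊤ : ℕ∞) N)
    (hNunit : ∀ t, ‖N t‖ = 1)
    (hNorth : ∀ t, ⟪N t, deriv γ t⟫ = 0)
    (W : ℝ → EuclideanSpace ℝ (Fin m))
    (hWsmooth : ContDiff ℝ (⊤ : ℕ∞) W)
    (hWunit : ∀ t, ‖W t‖ = 1)
    (hWmem : ∀ t, W t ∈ (Submodule.span ℝ {deriv γ t, N t})ᗮ)
    (hWparallel : ∀ t, projH γ N t (deriv W t) = 0)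
    (hWtorsion : ∀ t, ∃ c : ℝ, -projH γ N t (deriv N t) = c • W t)
    (τg : ℝ → ℝ) (hτg : ∀ t, τg t = -⟪deriv N t, W t⟫)
    (θ : ℝ → ℝ) (hθ : ∀ t, θ t = -∫ s in (0:ℝ)..t, τg s)
    (Z : ℝ → EuclideanSpace ℝ (Fin m))
    (hZ : ∀ t, Z t = -Real.sin (θ t) • W t + Real.cos (θ t) • N t) :
    ContDiff ℝ (⊤ : ℕ∞) Z ∧
      (∀ t, ‖Z t‖ = 1) ∧
      (∀ t, ⟪Z t, deriv γ t⟫ = 0) ∧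
      (∀ t, ∃ c : ℝ, deriv Z t = c • deriv γ t) :=
  exists_line_of_curvature_of_open_curve_general m γ N hNsmooth hNunit hNorth W hWsmooth hWunit
    hWmem hWparallel hWtorsion τg hτg θ hθ Z hZ
end

section
/- Let m ≥ 3, let γ : ℝ → EuclideanSpace ℝ (Fin m) be a smooth unit-speed curve, closed with period ℓ > 0, let N be a unit normal field along γ with N(t + ℓ) = N(t), and let W be a smooth map with W(t + ℓ) = W(t), ‖W(t)‖ = 1, W(t) ∈ ℋ(N)_t for all t, such that W is parallel in ℋ(N) and the geodesic torsion vector -π_{ℋ(N)_t}(N'(t)) is a scalar multiple of W(t) for every t. Set τ_g(t) = -⟨N'(t), W(t)⟩ and suppose ∫₀^ℓ τ_g(t) dt = 2πn for some integer n. Then Z(t) = -sin(θ(t)) W(t) + cos(θ(t)) N(t), with θ(t) = -∫₀ᵗ τ_g(s) ds, is a smooth unit normal field along γ satisfying Z(t + ℓ) = Z(t) for all t and such that Z'(t) is a scalar multiple of γ'(t) for every t. -/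
/-!
Because `W` is parallel in `ℋ(N)` and `-π_ℋ N'` is a multiple of `W`, the frame `(W, N)` obeys
`W' = a γ' + τ_g N` and `N' = p γ' - τ_g W`: modulo `γ'` it rotates in its own plane at speed
`τ_g`. Turning it back by the angle `θ`, where `θ' = -τ_g`, yields a unit normal `Z` with
`Z' ∥ γ'`. Since `τ_g` is `ℓ`-periodic with total integral `2πn`, `θ(t + ℓ) = θ(t) - 2πn`, so `Z`
closes up.
-/

open scoped RealInnerProductSpace

open Real
open scoped ContDiff

section InnerProductSpace

variable {E : Type*} [NormedAddCommGroup E] [InnerProductSpace ℝ E]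

theorem exists_eq_smul_add_inner_smul_add_starProjection {u v : E} (huv : ⟪u, v⟫ = 0)
    (hv : ‖v‖ = 1) [(Submodule.span ℝ {u, v}).HasOrthogonalProjection] (x : E) :
    ∃ a : ℝ, x = a • u + ⟪x, v⟫ • v + (Submodule.span ℝ {u, v})ᗮ.starProjection x := by
  set K := Submodule.span ℝ {u, v}
  have hxK : x - Kᗮ.starProjection x ∈ K :=
    K.orthogonal_orthogonal.le (Kᗮ.sub_starProjection_mem_orthogonal x)
  obtain ⟨a, b, hab⟩ := Submodule.mem_span_pair.mp hxK
  have hPv : ⟪Kᗮ.starProjection x, v⟫ = 0 :=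
    K.inner_left_of_mem_orthogonal (Submodule.subset_span (by simp))
      (Kᗮ.starProjection_apply_mem x)
  have hx : x = a • u + b • v + Kᗮ.starProjection x := by rw [hab, sub_add_cancel]
  refine ⟨a, ?_⟩
  have hb : ⟪x, v⟫ = b := by
    rw [hx, inner_add_left, inner_add_left, real_inner_smul_left, real_inner_smul_left, huv,
      real_inner_self_eq_norm_sq, hv, hPv]
    ring
  rwa [hb]

theorem inner_deriv_left_eq_neg_of_inner_eq_const {f g : ℝ → E} {c t : ℝ}
    (hf : DifferentiableAt ℝ f t) (hg : DifferentiableAt ℝ g t) (hfg : ∀ s, ⟪f s, g s⟫ = c) :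
    ⟪deriv f t, g t⟫ = -⟪f t, deriv g t⟫ := by
  have h := hf.hasDerivAt.inner ℝ hg.hasDerivAt
  rw [show (fun s => ⟪f s, g s⟫) = fun _ => c from funext hfg] at h
  linarith [h.unique (hasDerivAt_const t c)]

theorem norm_neg_sin_smul_add_cos_smul_s11 {v w : E} (hv : ‖v‖ = 1) (hw : ‖w‖ = 1)
    (hvw : ⟪v, w⟫ = 0) (θ : ℝ) : ‖-sin θ • v + cos θ • w‖ = 1 := by
  have hsq : ‖-sin θ • v + cos θ • w‖ ^ 2 = 1 := by
    rw [norm_add_sq_real, norm_smul, norm_smul, real_inner_smul_left, real_inner_smul_right,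
      hvw, hv, hw, norm_neg, Real.norm_eq_abs, Real.norm_eq_abs]
    nlinarith [sin_sq_add_cos_sq θ, sq_abs (sin θ), sq_abs (cos θ)]
  nlinarith [norm_nonneg (-sin θ • v + cos θ • w)]

end InnerProductSpace

section NormedSpace

variable {E : Type*} [NormedAddCommGroup E] [NormedSpace ℝ E]

theorem hasDerivAt_neg_sin_smul_add_cos_smul {W N : ℝ → E} {θ : ℝ → ℝ} {T : E} {τ a p t : ℝ}
    (hθ : HasDerivAt θ (-τ) t) (hW : HasDerivAt W (a • T + τ • N t) t)
    (hN : HasDerivAt N (p • T - τ • W t) t) :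
    HasDerivAt (fun s => -sin (θ s) • W s + cos (θ s) • N s)
      ((-sin (θ t) * a + cos (θ t) * p) • T) t := by
  convert (hθ.sin.neg.smul hW).add (hθ.cos.smul hN) using 1
  · rfl
  · simp only [Pi.neg_apply]
    module

theorem contDiff_integral_of_contDiff [CompleteSpace E] {f : ℝ → E} (hf : ContDiff ℝ ∞ f)
    (a : ℝ) : ContDiff ℝ ∞ (fun t => ∫ s in a..t, f s) := by
  refine contDiff_infty_iff_deriv.mpr ⟨fun t => ?_, ?_⟩
  · exact (hf.continuous.integral_hasStrictDerivAt a t).hasDerivAt.differentiableAt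
  · simpa only [funext (Continuous.deriv_integral f hf.continuous a)] using hf

theorem Function.Periodic.deriv {f : ℝ → E} {c : ℝ} (hf : Function.Periodic f c) :
    Function.Periodic (deriv f) c := by
  intro x
  rw [← deriv_comp_add_const, hf.funext]

end NormedSpace

noncomputable def geodesicTorsion {m : ℕ} (N W : ℝ → EuclideanSpace ℝ (Fin m)) (t : ℝ) : ℝ :=
  -⟪deriv N t, W t⟫

section FrameAlongCurve

variable {m : ℕ} {γ N W : ℝ → EuclideanSpace ℝ (Fin m)} {t : ℝ}

theorem contDiff_geodesicTorsion (hN : ContDiff ℝ ∞ N) (hW : ContDiff ℝ ∞ W) :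
    ContDiff ℝ ∞ (geodesicTorsion N W) :=
  ((contDiff_infty_iff_deriv.mp hN).2.inner ℝ hW).neg

theorem periodic_geodesicTorsion {ℓ : ℝ} (hN : Function.Periodic N ℓ)
    (hW : Function.Periodic W ℓ) : Function.Periodic (geodesicTorsion N W) ℓ := by
  intro s
  simp only [geodesicTorsion, hN.deriv s, hW s]

theorem exists_eq_smul_deriv_add_smul_add_projH (hN : ‖N t‖ = 1)
    (hNγ : ⟪N t, deriv γ t⟫ = 0) (x : EuclideanSpace ℝ (Fin m)) :
    ∃ a : ℝ, x = a • deriv γ t + ⟪x, N t⟫ • N t + projH γ N t x :=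
  exists_eq_smul_add_inner_smul_add_starProjection (by rwa [real_inner_comm]) hN x

theorem inner_eq_zero_of_mem_orthogonal_span_pair_s11
    (hW : W t ∈ (Submodule.span ℝ {deriv γ t, N t})ᗮ) :
    ⟪W t, deriv γ t⟫ = 0 ∧ ⟪W t, N t⟫ = 0 :=
  ⟨Submodule.inner_left_of_mem_orthogonal (Submodule.subset_span (by simp)) hW,
    Submodule.inner_left_of_mem_orthogonal (Submodule.subset_span (by simp)) hW⟩

theorem exists_hasDerivAt_smul_add_geodesicTorsion_smul (hN : DifferentiableAt ℝ N t)
    (hW : DifferentiableAt ℝ W t) (hNunit : ‖N t‖ = 1) (hNγ : ⟪N t, deriv γ t⟫ = 0)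
    (hWN : ∀ s, ⟪W s, N s⟫ = 0) (hpar : projH γ N t (deriv W t) = 0) :
    ∃ a : ℝ, HasDerivAt W (a • deriv γ t + geodesicTorsion N W t • N t) t := by
  obtain ⟨a, ha⟩ := exists_eq_smul_deriv_add_smul_add_projH hNunit hNγ (deriv W t)
  have hτ : ⟪deriv W t, N t⟫ = geodesicTorsion N W t := by
    rw [geodesicTorsion, inner_deriv_left_eq_neg_of_inner_eq_const hW hN hWN, real_inner_comm]
  rw [hpar, add_zero, hτ] at ha
  exact ⟨a, hW.hasDerivAt.congr_deriv ha⟩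

theorem exists_hasDerivAt_smul_sub_geodesicTorsion_smul (hN : DifferentiableAt ℝ N t)
    (hNunit : ∀ s, ‖N s‖ = 1) (hNγ : ⟪N t, deriv γ t⟫ = 0) (hWunit : ‖W t‖ = 1)
    (hWmem : W t ∈ (Submodule.span ℝ {deriv γ t, N t})ᗮ)
    (htors : ∃ c : ℝ, -projH γ N t (deriv N t) = c • W t) :
    ∃ p : ℝ, HasDerivAt N (p • deriv γ t - geodesicTorsion N W t • W t) t := by
  obtain ⟨c, hc⟩ := htors
  obtain ⟨p, hp⟩ := exists_eq_smul_deriv_add_smul_add_projH (hNunit t) hNγ (deriv N t)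
  have hN'N : ⟪deriv N t, N t⟫ = 0 := by
    have h := inner_deriv_left_eq_neg_of_inner_eq_const hN hN
      (fun s => by rw [real_inner_self_eq_norm_sq, hNunit s, one_pow] : ∀ s, ⟪N s, N s⟫ = 1)
    linarith [real_inner_comm (deriv N t) (N t)]
  rw [hN'N, zero_smul, add_zero, ← neg_neg (projH γ N t _), hc] at hp
  have hτ : geodesicTorsion N W t = c := by
    obtain ⟨hWγ, -⟩ := inner_eq_zero_of_mem_orthogonal_span_pair_s11 hWmem
    rw [geodesicTorsion, hp, inner_add_left, inner_neg_left, real_inner_smul_left,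
      real_inner_smul_left, real_inner_comm, hWγ, real_inner_self_eq_norm_sq, hWunit]
    ring
  exact ⟨p, hN.hasDerivAt.congr_deriv (by rw [hp, hτ, sub_eq_add_neg])⟩

end FrameAlongCurve

theorem exists_line_of_curvature_of_closed_curve_general
    (m : ℕ)
    (γ : ℝ → EuclideanSpace ℝ (Fin m)) (ℓ : ℝ)
    (N : ℝ → EuclideanSpace ℝ (Fin m))
    (hNsmooth : ContDiff ℝ (⊤ : ℕ∞) N)
    (hNclosed : ∀ t, N (t + ℓ) = N t)
    (hNunit : ∀ t, ‖N t‖ = 1)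
    (hNorth : ∀ t, ⟪N t, deriv γ t⟫ = 0)
    (W : ℝ → EuclideanSpace ℝ (Fin m))
    (hWsmooth : ContDiff ℝ (⊤ : ℕ∞) W)
    (hWclosed : ∀ t, W (t + ℓ) = W t)
    (hWunit : ∀ t, ‖W t‖ = 1)
    (hWmem : ∀ t, W t ∈ (Submodule.span ℝ {deriv γ t, N t})ᗮ)
    (hWparallel : ∀ t, projH γ N t (deriv W t) = 0)
    (hWtorsion : ∀ t, ∃ c : ℝ, -projH γ N t (deriv N t) = c • W t)
    (τg : ℝ → ℝ) (hτg : ∀ t, τg t = -⟪deriv N t, W t⟫)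
    (n : ℤ) (htotal : ∫ t in (0:ℝ)..ℓ, τg t = 2 * Real.pi * n)
    (θ : ℝ → ℝ) (hθ : ∀ t, θ t = -∫ s in (0:ℝ)..t, τg s)
    (Z : ℝ → EuclideanSpace ℝ (Fin m))
    (hZ : ∀ t, Z t = -Real.sin (θ t) • W t + Real.cos (θ t) • N t) :
    ContDiff ℝ (⊤ : ℕ∞) Z ∧
      (∀ t, ‖Z t‖ = 1) ∧
      (∀ t, ⟪Z t, deriv γ t⟫ = 0) ∧
      (∀ t, Z (t + ℓ) = Z t) ∧
      (∀ t, ∃ c : ℝ, deriv Z t = c • deriv γ t) := by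
  obtain rfl : τg = geodesicTorsion N W := funext hτg
  obtain rfl : Z = fun t => -sin (θ t) • W t + cos (θ t) • N t := funext hZ
  have hWorth := fun t => inner_eq_zero_of_mem_orthogonal_span_pair_s11 (hWmem t)
  have hτsmooth := contDiff_geodesicTorsion hNsmooth hWsmooth
  have hθsmooth : ContDiff ℝ ∞ θ := by
    simpa only [← funext hθ] using (contDiff_integral_of_contDiff hτsmooth 0).neg
  have hθper : ∀ t, θ (t + ℓ) = θ t - n * (2 * π) := fun t => by
    rw [hθ, hθ, (periodic_geodesicTorsion hNclosed hWclosed).intervalIntegral_add_eq_add 0 t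
      fun _ _ => hτsmooth.continuous.intervalIntegrable _ _, zero_add, htotal]
    ring
  refine ⟨(hθsmooth.sin.neg.smul hWsmooth).add (hθsmooth.cos.smul hNsmooth), fun t => ?_,
    fun t => ?_, fun t => ?_, fun t => ?_⟩
  · exact norm_neg_sin_smul_add_cos_smul_s11 (hWunit t) (hNunit t) (hWorth t).2 _
  · simp only [inner_add_left, real_inner_smul_left, (hWorth t).1, hNorth t, mul_zero, add_zero]
  · simp only [hθper, hWclosed, hNclosed, sin_sub_int_mul_two_pi, cos_sub_int_mul_two_pi]
  · have hθ' : HasDerivAt θ (-geodesicTorsion N W t) t := by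
      rw [funext hθ]
      exact (hτsmooth.continuous.integral_hasStrictDerivAt 0 t).hasDerivAt.neg
    obtain ⟨a, hW'⟩ := exists_hasDerivAt_smul_add_geodesicTorsion_smul
      (hNsmooth.differentiable (by simp) t) (hWsmooth.differentiable (by simp) t) (hNunit t)
      (hNorth t) (fun s => (hWorth s).2) (hWparallel t)
    obtain ⟨p, hN'⟩ := exists_hasDerivAt_smul_sub_geodesicTorsion_smul
      (hNsmooth.differentiable (by simp) t) hNunit (hNorth t) (hWunit t) (hWmem t) (hWtorsion t)
    exact ⟨_, (hasDerivAt_neg_sin_smul_add_cos_smul hθ' hW' hN').deriv⟩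

/-- Closed case: if the total geodesic torsion of `γ` with respect to `N` is an integer
multiple of `2π`, then the rotated normal `Z = -sin θ · W + cos θ · N`, with
`θ(t) = -∫₀ᵗ τ_g`, is a closed unit normal field exhibiting `γ` as a line of curvature. -/
theorem exists_line_of_curvature_of_closed_curve
    (m : ℕ) (hm : 3 ≤ m)
    (γ : ℝ → EuclideanSpace ℝ (Fin m)) (ℓ : ℝ) (hℓ : 0 < ℓ)
    (hsmooth : ContDiff ℝ (⊤ : ℕ∞) γ)
    (hunit : ∀ t, ‖deriv γ t‖ = 1)
    (hclosed : ∀ t, γ (t + ℓ) = γ t)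
    (N : ℝ → EuclideanSpace ℝ (Fin m))
    (hNsmooth : ContDiff ℝ (⊤ : ℕ∞) N)
    (hNclosed : ∀ t, N (t + ℓ) = N t)
    (hNunit : ∀ t, ‖N t‖ = 1)
    (hNorth : ∀ t, ⟪N t, deriv γ t⟫ = 0)
    (W : ℝ → EuclideanSpace ℝ (Fin m))
    (hWsmooth : ContDiff ℝ (⊤ : ℕ∞) W)
    (hWclosed : ∀ t, W (t + ℓ) = W t)
    (hWunit : ∀ t, ‖W t‖ = 1)
    (hWmem : ∀ t, W t ∈ (Submodule.span ℝ {deriv γ t, N t})ᗮ)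
    (hWparallel : ∀ t, projH γ N t (deriv W t) = 0)
    (hWtorsion : ∀ t, ∃ c : ℝ, -projH γ N t (deriv N t) = c • W t)
    (τg : ℝ → ℝ) (hτg : ∀ t, τg t = -⟪deriv N t, W t⟫)
    (n : ℤ) (htotal : ∫ t in (0:ℝ)..ℓ, τg t = 2 * Real.pi * n)
    (θ : ℝ → ℝ) (hθ : ∀ t, θ t = -∫ s in (0:ℝ)..t, τg s)
    (Z : ℝ → EuclideanSpace ℝ (Fin m))
    (hZ : ∀ t, Z t = -Real.sin (θ t) • W t + Real.cos (θ t) • N t) :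
    ContDiff ℝ (⊤ : ℕ∞) Z ∧
      (∀ t, ‖Z t‖ = 1) ∧
      (∀ t, ⟪Z t, deriv γ t⟫ = 0) ∧
      (∀ t, Z (t + ℓ) = Z t) ∧
      (∀ t, ∃ c : ℝ, deriv Z t = c • deriv γ t) :=
  exists_line_of_curvature_of_closed_curve_general m γ ℓ N hNsmooth hNclosed hNunit hNorth W
    hWsmooth hWclosed hWunit hWmem hWparallel hWtorsion τg hτg n htotal θ hθ Z hZ
end

section
/- Let m ≥ 3, let γ : ℝ → EuclideanSpace ℝ (Fin m) be a smooth unit-speed curve with nowhere-vanishing curvature κ(t) = ‖γ''(t)‖ > 0 and principal normal P = γ''/κ. Let N be a unit normal field along γ such that N'(t) is a scalar multiple of γ'(t) for every t (γ is a line of curvature with respect to N), let H be a smooth map with ‖H(t)‖ = 1 and H(t) ∈ ℋ(N)_t for all t, parallel in ℋ(N) (π_{ℋ(N)_t}(H'(t)) = 0 for all t), and let θ : ℝ → ℝ be smooth with P(t) = -sin(θ(t)) H(t) + cos(θ(t)) N(t) for all t (P is a parallel rotation of N). Then γ is three-dimensional: setting H₁(t) = cos(θ(t)) H(t) + sin(θ(t))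 N(t) and τ = θ', one has ‖H₁(t)‖ = 1, ⟨H₁(t), γ'(t)⟩ = ⟨H₁(t), P(t)⟩ = 0, P'(t) = -κ(t) γ'(t) − τ(t) H₁(t), and H₁'(t) = τ(t) P(t) for all t. -/
/-!
By Rodrigues' condition `N'` is a multiple of `γ'`, and parallelism of `H` in `ℋ(N)` puts `H'` in
`span {γ', N}`. Differentiating the relations `⟪N, γ'⟫ = ⟪H, γ'⟫ = ⟪H, N⟫ = 0` and using
`γ'' = κ P` with `P = -sin θ H + cos θ N` pins them down: `N' = -κ cos θ γ'` and
`H' = κ sin θ γ'`. Differentiating the rotated frame `(H₁, P)` then gives the Frenet equations with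
`τ = θ'`: the `γ'`-terms cancel in `H₁'` and add up to `-κ γ'` in `P'` since `sin² θ + cos² θ = 1`.
-/

open scoped RealInnerProductSpace

open Real Submodule

section InnerProductSpace

variable {E : Type*} [NormedAddCommGroup E] [InnerProductSpace ℝ E]

theorem mem_orthogonal_span_pair_iff {a b x : E} :
    x ∈ (span ℝ {a, b})ᗮ ↔ ⟪x, a⟫ = 0 ∧ ⟪x, b⟫ = 0 := by
  rw [span_insert, ← inf_orthogonal, mem_inf, mem_orthogonal_singleton_iff_inner_left,
    mem_orthogonal_singleton_iff_inner_left]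

theorem eq_inner_smul_add_inner_smul_of_mem_span_pair {a b v : E} (ha : ‖a‖ = 1)
    (hb : ‖b‖ = 1) (hab : ⟪a, b⟫ = 0) (hv : v ∈ span ℝ {a, b}) :
    v = ⟪v, a⟫ • a + ⟪v, b⟫ • b := by
  obtain ⟨x, y, rfl⟩ := mem_span_pair.mp hv
  simp [inner_add_left, real_inner_smul_left, ha, hb, hab, real_inner_comm a b]

theorem real_inner_eq_norm_mul_inner_inv_norm_smul (x y : E) :
    ⟪x, y⟫ = ‖y‖ * ⟪x, ‖y‖⁻¹ • y⟫ := by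
  rcases eq_or_ne y 0 with rfl | hy
  · simp
  · rw [real_inner_smul_right, ← mul_assoc, mul_inv_cancel₀ (norm_ne_zero_iff.mpr hy), one_mul]

theorem real_inner_deriv_left_eq_neg {f g : ℝ → E} {t : ℝ} (hf : DifferentiableAt ℝ f t)
    (hg : DifferentiableAt ℝ g t) (hfg : ∀ s, ⟪f s, g s⟫ = 0) :
    ⟪deriv f t, g t⟫ = -⟪f t, deriv g t⟫ := by
  have h := (hf.hasDerivAt.inner ℝ hg.hasDerivAt).deriv
  rw [funext hfg, deriv_const] at h
  linarith

theorem deriv_eq_neg_inner_smul_of_deriv_eq_smul {N T : ℝ → E} {t c : ℝ}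
    (hN : DifferentiableAt ℝ N t) (hT : DifferentiableAt ℝ T t) (hNT : ∀ s, ⟪N s, T s⟫ = 0)
    (hTt : ‖T t‖ = 1) (hc : deriv N t = c • T t) :
    deriv N t = -⟪N t, deriv T t⟫ • T t := by
  rw [← real_inner_deriv_left_eq_neg hN hT hNT, hc, real_inner_smul_left,
    real_inner_self_eq_norm_sq, hTt, one_pow, mul_one]

theorem deriv_eq_neg_inner_smul_sub_inner_smul_of_deriv_mem_span_pair {H T N : ℝ → E} {t : ℝ}
    (hH : DifferentiableAt ℝ H t) (hT : DifferentiableAt ℝ T t) (hN : DifferentiableAt ℝ N t)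
    (hHT : ∀ s, ⟪H s, T s⟫ = 0) (hHN : ∀ s, ⟪H s, N s⟫ = 0) (hTt : ‖T t‖ = 1)
    (hNt : ‖N t‖ = 1) (hTN : ⟪T t, N t⟫ = 0) (hmem : deriv H t ∈ span ℝ {T t, N t}) :
    deriv H t = -⟪H t, deriv T t⟫ • T t - ⟪H t, deriv N t⟫ • N t := by
  refine (eq_inner_smul_add_inner_smul_of_mem_span_pair hTt hNt hTN hmem).trans ?_
  rw [real_inner_deriv_left_eq_neg hH hT hHT, real_inner_deriv_left_eq_neg hH hN hHN, neg_smul,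
    neg_smul, sub_eq_add_neg]

theorem norm_cos_smul_add_sin_smul {u v : E} (hu : ‖u‖ = 1) (hv : ‖v‖ = 1) (huv : ⟪u, v⟫ = 0)
    (θ : ℝ) : ‖cos θ • u + sin θ • v‖ = 1 := by
  rw [← pow_eq_one_iff_of_nonneg (norm_nonneg _) two_ne_zero, ← real_inner_self_eq_norm_sq]
  simp only [inner_add_left, inner_add_right, real_inner_smul_left, real_inner_smul_right, huv,
    real_inner_comm u v]
  rw [real_inner_self_eq_norm_sq u, real_inner_self_eq_norm_sq v, hu, hv]
  linear_combination sin_sq_add_cos_sq θ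

theorem real_inner_cos_smul_add_sin_smul_neg_sin_smul_add_cos_smul {u v : E} (hu : ‖u‖ = 1)
    (hv : ‖v‖ = 1) (huv : ⟪u, v⟫ = 0) (θ : ℝ) :
    ⟪cos θ • u + sin θ • v, -sin θ • u + cos θ • v⟫ = 0 := by
  simp only [inner_add_left, inner_add_right, real_inner_smul_left, real_inner_smul_right,
    real_inner_self_eq_norm_sq, hu, hv, huv, real_inner_comm u v]
  ring

theorem hasDerivAt_cos_smul_add_sin_smul {θ : ℝ → ℝ} {u v : ℝ → E} {θ' t : ℝ} {u' v' : E}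
    (hθ : HasDerivAt θ θ' t) (hu : HasDerivAt u u' t) (hv : HasDerivAt v v' t) :
    HasDerivAt (fun s => cos (θ s) • u s + sin (θ s) • v s)
      (cos (θ t) • u' + sin (θ t) • v' + θ' • (-sin (θ t) • u t + cos (θ t) • v t)) t := by
  refine ((hθ.cos.smul hu).add (hθ.sin.smul hv)).congr_deriv ?_
  module

theorem hasDerivAt_neg_sin_smul_add_cos_smul_s16 {θ : ℝ → ℝ} {u v : ℝ → E} {θ' t : ℝ} {u' v' : E}
    (hθ : HasDerivAt θ θ' t) (hu : HasDerivAt u u' t) (hv : HasDerivAt v v' t) :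
    HasDerivAt (fun s => -sin (θ s) • u s + cos (θ s) • v s)
      (-sin (θ t) • u' + cos (θ t) • v' - θ' • (cos (θ t) • u t + sin (θ t) • v t)) t := by
  refine ((hθ.sin.neg.smul hu).add (hθ.cos.smul hv)).congr_deriv ?_
  simp only [Pi.neg_apply]
  module

end InnerProductSpace

theorem projH_eq_zero_iff {m : ℕ} {γ N : ℝ → EuclideanSpace ℝ (Fin m)} {t : ℝ}
    {x : EuclideanSpace ℝ (Fin m)} : projH γ N t x = 0 ↔ x ∈ span ℝ {deriv γ t, N t} := by
  rw [projH, coe_eq_zero, orthogonalProjectionOnto_eq_zero_iff, orthogonal_orthogonal]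

theorem threeDimensional_of_parallel_rotation_principal_normal_general
    (m : ℕ)
    (γ : ℝ → EuclideanSpace ℝ (Fin m))
    (hsmooth : ContDiff ℝ (⊤ : ℕ∞) γ)
    (hunit : ∀ t, ‖deriv γ t‖ = 1)
    (P : ℝ → EuclideanSpace ℝ (Fin m))
    (hP : ∀ t, P t = ‖deriv (deriv γ) t‖⁻¹ • deriv (deriv γ) t)
    (N : ℝ → EuclideanSpace ℝ (Fin m))
    (hNsmooth : ContDiff ℝ (⊤ : ℕ∞) N)
    (hNunit : ∀ t, ‖N t‖ = 1)
    (hNorth : ∀ t, ⟪N t, deriv γ t⟫ = 0)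
    (hRodrigues : ∀ t, ∃ c : ℝ, deriv N t = c • deriv γ t)
    (H : ℝ → EuclideanSpace ℝ (Fin m))
    (hHsmooth : ContDiff ℝ (⊤ : ℕ∞) H)
    (hHunit : ∀ t, ‖H t‖ = 1)
    (hHmem : ∀ t, H t ∈ (Submodule.span ℝ {deriv γ t, N t})ᗮ)
    (hHparallel : ∀ t, projH γ N t (deriv H t) = 0)
    (θ : ℝ → ℝ) (hθ : ContDiff ℝ (⊤ : ℕ∞) θ)
    (hProt : ∀ t, P t = -Real.sin (θ t) • H t + Real.cos (θ t) • N t) :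
    ∀ t,
      ‖Real.cos (θ t) • H t + Real.sin (θ t) • N t‖ = 1 ∧
      ⟪Real.cos (θ t) • H t + Real.sin (θ t) • N t, deriv γ t⟫ = 0 ∧
      ⟪Real.cos (θ t) • H t + Real.sin (θ t) • N t, P t⟫ = 0 ∧
      deriv P t = -‖deriv (deriv γ) t‖ • deriv γ t -
        deriv θ t • (Real.cos (θ t) • H t + Real.sin (θ t) • N t) ∧
      deriv (fun s => Real.cos (θ s) • H s + Real.sin (θ s) • N s) t =
        deriv θ t • P t := by
  have hT : Differentiable ℝ (deriv γ) :=
    (contDiff_infty_iff_deriv.mp hsmooth).2.differentiable (by simp)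
  have hN : Differentiable ℝ N := hNsmooth.differentiable (by simp)
  have hH : Differentiable ℝ H := hHsmooth.differentiable (by simp)
  have hθ' : Differentiable ℝ θ := hθ.differentiable (by simp)
  have hHT : ∀ t, ⟪H t, deriv γ t⟫ = 0 := fun t => (mem_orthogonal_span_pair_iff.mp (hHmem t)).1
  have hHN : ∀ t, ⟪H t, N t⟫ = 0 := fun t => (mem_orthogonal_span_pair_iff.mp (hHmem t)).2
  have hγ'' : ∀ t x, ⟪x, deriv (deriv γ) t⟫ =
      ‖deriv (deriv γ) t‖ * ⟪x, -sin (θ t) • H t + cos (θ t) • N t⟫ := fun t x => by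
    rw [real_inner_eq_norm_mul_inner_inv_norm_smul, ← hP, hProt]
  have hN' : ∀ t, deriv N t = -(‖deriv (deriv γ) t‖ * cos (θ t)) • deriv γ t := fun t => by
    obtain ⟨c, hc⟩ := hRodrigues t
    rw [deriv_eq_neg_inner_smul_of_deriv_eq_smul (hN t) (hT t) hNorth (hunit t) hc, hγ'']
    simp [inner_add_right, real_inner_smul_right, real_inner_comm (H t), hHN, hNunit]
  have hH' : ∀ t, deriv H t = (‖deriv (deriv γ) t‖ * sin (θ t)) • deriv γ t := fun t => by
    rw [deriv_eq_neg_inner_smul_sub_inner_smul_of_deriv_mem_span_pair (hH t) (hT t) (hN t) hHT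
      hHN (hunit t) (hNunit t) (by rw [real_inner_comm, hNorth])
      (projH_eq_zero_iff.mp (hHparallel t)), hγ'', hN']
    simp [inner_add_right, real_inner_smul_right, hHN, hHT, hHunit]
  intro t
  refine ⟨norm_cos_smul_add_sin_smul (hHunit t) (hNunit t) (hHN t) _, ?_, ?_, ?_, ?_⟩
  · simp [inner_add_left, real_inner_smul_left, hHT, hNorth]
  · rw [hProt]
    exact real_inner_cos_smul_add_sin_smul_neg_sin_smul_add_cos_smul (hHunit t) (hNunit t) (hHN t) _
  · rw [funext hProt, (hasDerivAt_neg_sin_smul_add_cos_smul_s16 (hθ' t).hasDerivAt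
      (hH t).hasDerivAt (hN t).hasDerivAt).deriv, hH', hN']
    linear_combination (norm := module) -‖deriv (deriv γ) t‖ • sin_sq_add_cos_sq (θ t) • deriv γ t
  · rw [(hasDerivAt_cos_smul_add_sin_smul (hθ' t).hasDerivAt (hH t).hasDerivAt
      (hN t).hasDerivAt).deriv, hH', hN', ← hProt]
    module

/-- If `γ` is a line of curvature of `S` and the principal normal `P` is a parallel
rotation of the surface normal `N`, then `γ` is three-dimensional, with
`H₁ = cos θ · H + sin θ · N` and torsion `τ = θ'`. -/
theorem threeDimensional_of_parallel_rotation_principal_normal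
    (m : ℕ) (hm : 3 ≤ m)
    (γ : ℝ → EuclideanSpace ℝ (Fin m))
    (hsmooth : ContDiff ℝ (⊤ : ℕ∞) γ)
    (hunit : ∀ t, ‖deriv γ t‖ = 1)
    (hcurv : ∀ t, ‖deriv (deriv γ) t‖ > 0)
    (P : ℝ → EuclideanSpace ℝ (Fin m))
    (hP : ∀ t, P t = ‖deriv (deriv γ) t‖⁻¹ • deriv (deriv γ) t)
    (N : ℝ → EuclideanSpace ℝ (Fin m))
    (hNsmooth : ContDiff ℝ (⊤ : ℕ∞) N)
    (hNunit : ∀ t, ‖N t‖ = 1)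
    (hNorth : ∀ t, ⟪N t, deriv γ t⟫ = 0)
    (hRodrigues : ∀ t, ∃ c : ℝ, deriv N t = c • deriv γ t)
    (H : ℝ → EuclideanSpace ℝ (Fin m))
    (hHsmooth : ContDiff ℝ (⊤ : ℕ∞) H)
    (hHunit : ∀ t, ‖H t‖ = 1)
    (hHmem : ∀ t, H t ∈ (Submodule.span ℝ {deriv γ t, N t})ᗮ)
    (hHparallel : ∀ t, projH γ N t (deriv H t) = 0)
    (θ : ℝ → ℝ) (hθ : ContDiff ℝ (⊤ : ℕ∞) θ)
    (hProt : ∀ t, P t = -Real.sin (θ t) • H t + Real.cos (θ t) • N t) :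
    ∀ t,
      ‖Real.cos (θ t) • H t + Real.sin (θ t) • N t‖ = 1 ∧
      ⟪Real.cos (θ t) • H t + Real.sin (θ t) • N t, deriv γ t⟫ = 0 ∧
      ⟪Real.cos (θ t) • H t + Real.sin (θ t) • N t, P t⟫ = 0 ∧
      deriv P t = -‖deriv (deriv γ) t‖ • deriv γ t -
        deriv θ t • (Real.cos (θ t) • H t + Real.sin (θ t) • N t) ∧
      deriv (fun s => Real.cos (θ s) • H s + Real.sin (θ s) • N s) t =
        deriv θ t • P t :=
  threeDimensional_of_parallel_rotation_principal_normal_general m γ hsmooth hunit P hP N hNsmooth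
    hNunit hNorth hRodrigues H hHsmooth hHunit hHmem hHparallel θ hθ hProt
end
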